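/- Let D be a simple strongly connected digraph on n vertices, let u, v, w be vertices of D with (u,v) an arc of D, and let x = (x_1,…,x_n)^T be the unique positive unit eigenvector of Q(D) corresponding to q(D). Let H be the digraph (possibly with a multiple arc (u,w)) obtained from D by deleting the arc (u,v) and adding an arc (u,w). If x_w ≥ x_v, then q(H) ≥ q(D). Furthermore, if H is strongly connected and x_w > x_v, then q(H) > q(D). -/

import Mathlib

/-!
Rotating the arc `(u,v)` to `(u,w)` keeps every outdegree, so `Q(H) = Q(D) + E_uw - E_uv` and
`Q(H) x = q(D) x + (x_w - x_v) e_u`, which is `≥ q(D) x` when `x_w ≥ x_v`. For a nonnegative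
matrix `M` and a nonnegative nonzero `x`, `r x ≤ M x` forces `r ≤ ρ(M)`: iterating gives
`r^k x ≤ M^k x`, so `‖M^k‖ ≥ c r^k` with `c > 0`, and Gelfand's formula applies. For the strict
inequality, strong connectivity of `H` gives for each `i` a power of `M = Q(H)` with positive
`(i,u)` entry; their sum `P` commutes with `M`, and `z = P x` satisfies
`M z - r z = P (M x - r x) > 0` in every coordinate, hence `(r + ε) z ≤ M z` for some `ε > 0`.
-/

open Matrix

namespace SignlessDigraph

variable {n : ℕ}

/-- Real adjacency matrix of a (multi)digraph on `Fin n`, given by arc multiplicities. -/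
def adjMat (W : Fin n → Fin n → ℕ) : Matrix (Fin n) (Fin n) ℝ :=
  fun i j => (W i j : ℝ)

/-- Outdegree of a vertex. -/
def outdeg (W : Fin n → Fin n → ℕ) (i : Fin n) : ℕ := ∑ j, W i j

/-- Indegree of a vertex. -/
def indeg (W : Fin n → Fin n → ℕ) (i : Fin n) : ℕ := ∑ j, W j i

/-- The signless Laplacian matrix `Q(D) = diag(outdegrees) + A(D)`. -/
noncomputable def Qmat (W : Fin n → Fin n → ℕ) : Matrix (Fin n) (Fin n) ℝ :=
  Matrix.diagonal (fun i => (outdeg W i : ℝ)) + adjMat W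

/-- Spectral radius of a real matrix: the maximum modulus of its (complex) eigenvalues. -/
noncomputable def radius (M : Matrix (Fin n) (Fin n) ℝ) : ℝ :=
  sSup {r : ℝ | ∃ μ ∈ spectrum ℂ (M.map ((↑) : ℝ → ℂ)), r = ‖μ‖}

/-- The signless Laplacian spectral radius `q(D)`. -/
noncomputable def q (W : Fin n → Fin n → ℕ) : ℝ := radius (Qmat W)

/-- The (adjacency) spectral radius `ρ(D)`. -/
noncomputable def rho (W : Fin n → Fin n → ℕ) : ℝ := radius (adjMat W)

/-- A digraph is simple: no loops and no multiple arcs. -/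
def Simple (W : Fin n → Fin n → ℕ) : Prop :=
  (∀ i, W i i = 0) ∧ ∀ i j, W i j ≤ 1

/-- Strong connectivity: every vertex is reachable from every vertex by a directed path. -/
def StronglyConnected (W : Fin n → Fin n → ℕ) : Prop :=
  ∀ i j : Fin n, Relation.ReflTransGen (fun a b => W a b ≠ 0) i j

/-- Isomorphism of digraphs on `Fin n`. -/
def Iso (W W' : Fin n → Fin n → ℕ) : Prop :=
  ∃ e : Fin n ≃ Fin n, ∀ i j, W (e i) (e j) = W' i j

/-- The clique number: maximum size of a set of vertices with all arcs in both directions. -/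
noncomputable def cliqueNum (W : Fin n → Fin n → ℕ) : ℕ :=
  sSup {d : ℕ | ∃ s : Finset (Fin n), s.card = d ∧ ∀ i ∈ s, ∀ j ∈ s, i ≠ j → W i j ≠ 0}

/-- `W` has a directed cycle of length `c`. -/
def HasCycleLen (W : Fin n → Fin n → ℕ) (c : ℕ) : Prop :=
  ∃ (hc : 2 ≤ c) (p : Fin c → Fin n), Function.Injective p ∧
    ∀ i : Fin c, W (p i) (p ⟨((i : ℕ) + 1) % c, Nat.mod_lt _ (by omega)⟩) ≠ 0

/-- The girth: length of a shortest directed cycle. -/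
noncomputable def girth (W : Fin n → Fin n → ℕ) : ℕ := sInf {c | HasCycleLen W c}

/-- The complete digraph `K_n^↔`. -/
def Kcomp (n : ℕ) : Fin n → Fin n → ℕ := fun i j => if i = j then 0 else 1

/-- The directed cycle `C_n^→`, with arcs `i → i+1 (mod n)`. -/
def cyc (n : ℕ) : Fin n → Fin n → ℕ := fun i j => if (j : ℕ) = ((i : ℕ) + 1) % n then 1 else 0

/-- The digraph `B_{n,d}` (for `2 ≤ d ≤ n-1`): a complete digraph on the vertices
`0, …, d-1` together with a directed path `0 → d → d+1 → ⋯ → n-1 → 1`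
(the path `u_1 u_2 ⋯ u_{n-d+2}` with `u_1 = 0`, `u_{n-d+2} = 1`,
and internal vertices `d, …, n-1`). -/
def B (n d : ℕ) : Fin n → Fin n → ℕ := fun i j =>
  if i ≠ j ∧ (i : ℕ) < d ∧ (j : ℕ) < d then 1
  else if (i : ℕ) = 0 ∧ (j : ℕ) = d then 1
  else if d ≤ (i : ℕ) ∧ (j : ℕ) = (i : ℕ) + 1 then 1
  else if (i : ℕ) = n - 1 ∧ (j : ℕ) = 1 then 1
  else 0

/-- `B'_{n,d} = B_{n,d} − (u_{n-d+1}, u_{n-d+2}) + (u_{n-d+1}, u_1)`, i.e. the arc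
`n-1 → 1` is replaced by the arc `n-1 → 0`. -/
def B' (n d : ℕ) : Fin n → Fin n → ℕ := fun i j =>
  if (i : ℕ) = n - 1 ∧ (j : ℕ) = 1 then 0
  else if (i : ℕ) = n - 1 ∧ (j : ℕ) = 0 then 1
  else B n d i j

/-- The digraph `C_{n,g}` (for `2 ≤ g ≤ n-1`): vertices `u_1, …, u_n` are `0, …, n-1`,
with arcs `i → i+1` for `0 ≤ i ≤ n-2` together with the arcs `g-1 → 0` and `n-1 → 0`. -/
def Cng (n g : ℕ) : Fin n → Fin n → ℕ := fun i j =>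
  if (j : ℕ) = (i : ℕ) + 1 then 1
  else if ((i : ℕ) = g - 1 ∨ (i : ℕ) = n - 1) ∧ (j : ℕ) = 0 then 1
  else 0

/-- `C'_{n,g} = C_{n,g} − (u_n, u_1) + (u_n, u_g)`, i.e. the arc `n-1 → 0` is replaced by
the arc `n-1 → g-1`. -/
def Cng' (n g : ℕ) : Fin n → Fin n → ℕ := fun i j =>
  if (i : ℕ) = n - 1 ∧ (j : ℕ) = 0 then 0
  else if (i : ℕ) = n - 1 ∧ (j : ℕ) = g - 1 then 1
  else Cng n g i j

/-- The θ-digraph `θ(a,b,c)` realized on `Fin n` (intended for `n = a + b + c + 2`):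
vertex `0` is the common initial vertex of the paths `P_{a+2}`, `P_{b+2}` and terminal
vertex of `P_{c+2}`; vertex `1` is the common terminal vertex of `P_{a+2}`, `P_{b+2}`
and initial vertex of `P_{c+2}`; the internal vertices of the three paths are
`2, …, a+1`, `a+2, …, a+b+1` and `a+b+2, …, a+b+c+1` respectively. -/
def theta (n a b c : ℕ) : Fin n → Fin n → ℕ := fun i j =>
  if ((a = 0 ∧ (i : ℕ) = 0 ∧ (j : ℕ) = 1) ∨
      (a ≠ 0 ∧ (((i : ℕ) = 0 ∧ (j : ℕ) = 2) ∨
        (2 ≤ (i : ℕ) ∧ (i : ℕ) ≤ a ∧ (j : ℕ) = (i : ℕ) + 1) ∨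
        ((i : ℕ) = a + 1 ∧ (j : ℕ) = 1))) ∨
      (b = 0 ∧ (i : ℕ) = 0 ∧ (j : ℕ) = 1) ∨
      (b ≠ 0 ∧ (((i : ℕ) = 0 ∧ (j : ℕ) = a + 2) ∨
        (a + 2 ≤ (i : ℕ) ∧ (i : ℕ) ≤ a + b ∧ (j : ℕ) = (i : ℕ) + 1) ∨
        ((i : ℕ) = a + b + 1 ∧ (j : ℕ) = 1))) ∨
      (c = 0 ∧ (i : ℕ) = 1 ∧ (j : ℕ) = 0) ∨
      (c ≠ 0 ∧ (((i : ℕ) = 1 ∧ (j : ℕ) = a + b + 2) ∨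
        (a + b + 2 ≤ (i : ℕ) ∧ (i : ℕ) ≤ a + b + c ∧ (j : ℕ) = (i : ℕ) + 1) ∨
        ((i : ℕ) = a + b + c + 1 ∧ (j : ℕ) = 0))))
  then 1 else 0

/-- The digraph `K→(n,k,m)`: the vertex set is partitioned into
`V₁ = {0,…,m-1}`, `S = {m,…,m+k-1}`, `V₂ = {m+k,…,n-1}`; it is the complete digraph
with all arcs from `V₂` to `V₁` removed. -/
def Kdir (n k m : ℕ) : Fin n → Fin n → ℕ := fun i j =>
  if i = j then 0
  else if m + k ≤ (i : ℕ) ∧ (j : ℕ) < m then 0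
  else 1

/-- The digraph `D_{uv}` obtained from `D` by deleting the arc `(u,v)`, identifying `u`
with `v` (the merged vertex is `v`; the vertex `u` becomes isolated) and deleting
multiple arcs (and loops). -/
def contract (W : Fin n → Fin n → ℕ) (u v : Fin n) : Fin n → Fin n → ℕ :=
  fun i j =>
    if i = u ∨ j = u ∨ i = j then 0
    else if i = v then min 1 (W v j + W u j)
    else if j = v then min 1 (W i v + W i u)
    else min 1 (W i j)

/-- The digraph `D^w` obtained from `D` by subdividing the arc `(u,v)` with a new
vertex `w` (realized as the last vertex of `Fin (n+1)`). -/
def subdivide (W : Fin n → Fin n → ℕ) (u v : Fin n) : Fin (n + 1) → Fin (n + 1) → ℕ :=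
  fun i j =>
    if hi : (i : ℕ) < n then
      if hj : (j : ℕ) < n then
        if (⟨(i : ℕ), hi⟩ : Fin n) = u ∧ (⟨(j : ℕ), hj⟩ : Fin n) = v then 0
        else W ⟨(i : ℕ), hi⟩ ⟨(j : ℕ), hj⟩
      else if (⟨(i : ℕ), hi⟩ : Fin n) = u then 1 else 0
    else
      if hj : (j : ℕ) < n then (if (⟨(j : ℕ), hj⟩ : Fin n) = v then 1 else 0)
      else 0

open Filter
open scoped ENNReal NNReal Topology

lemma ofReal_le_of_mul_pow_le {r c : ℝ} (hr : 0 ≤ r) (hc : 0 < c) {t : ℕ → ℝ≥0} {ρ : ℝ≥0∞}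
    (h : ∀ k, c * r ^ k ≤ t k)
    (ht : Tendsto (fun k : ℕ => (t k : ℝ≥0∞) ^ (1 / k : ℝ)) atTop (𝓝 ρ)) :
    ENNReal.ofReal r ≤ ρ := by
  have hc_root : Tendsto (fun k : ℕ => c ^ (1 / k : ℝ)) atTop (𝓝 1) := by
    simpa [Function.comp_def] using (Real.continuousAt_const_rpow hc.ne').tendsto.comp
      tendsto_one_div_atTop_nhds_zero_nat
  have hlim : Tendsto (fun k : ℕ => ENNReal.ofReal (c ^ (1 / k : ℝ) * r)) atTop
      (𝓝 (ENNReal.ofReal r)) :=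
    ENNReal.tendsto_ofReal (by simpa using hc_root.mul_const r)
  refine le_of_tendsto_of_tendsto hlim ht ?_
  filter_upwards [eventually_ne_atTop 0] with k hk
  have hroot : (c * r ^ k) ^ (1 / k : ℝ) = c ^ (1 / k : ℝ) * r := by
    rw [Real.mul_rpow hc.le (by positivity), one_div, Real.pow_rpow_inv_natCast hr hk]
  rw [← hroot, ← ENNReal.ofReal_coe_nnreal,
    ENNReal.ofReal_rpow_of_nonneg (t k).coe_nonneg (by positivity)]
  exact ENNReal.ofReal_le_ofReal (Real.rpow_le_rpow (by positivity) (h k) (by positivity))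

section NonnegMatrix

variable {ι : Type*} [Fintype ι] {M : Matrix ι ι ℝ}

lemma mulVec_mono_of_nonneg (hM : ∀ i j, 0 ≤ M i j) {x y : ι → ℝ} (hxy : x ≤ y) :
    M *ᵥ x ≤ M *ᵥ y :=
  fun i => dotProduct_le_dotProduct_of_nonneg_left hxy (hM i)

variable [DecidableEq ι]

lemma pow_smul_le_pow_mulVec (hM : ∀ i j, 0 ≤ M i j) {x : ι → ℝ} {r : ℝ} (hr : 0 ≤ r)
    (h : r • x ≤ M *ᵥ x) (k : ℕ) : r ^ k • x ≤ (M ^ k) *ᵥ x := by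
  induction k with
  | zero => simp
  | succ k ih =>
    calc r ^ (k + 1) • x = r ^ k • (r • x) := by rw [pow_succ, mul_smul]
      _ ≤ r ^ k • (M *ᵥ x) := smul_le_smul_of_nonneg_left h (pow_nonneg hr k)
      _ = M *ᵥ (r ^ k • x) := (mulVec_smul M _ x).symm
      _ ≤ M *ᵥ ((M ^ k) *ᵥ x) := mulVec_mono_of_nonneg hM ih
      _ = (M ^ (k + 1)) *ᵥ x := by rw [mulVec_mulVec, ← pow_succ']

attribute [local instance] Matrix.linftyOpNormedAddCommGroup Matrix.linftyOpNormedRing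
  Matrix.linftyOpNormedAlgebra

lemma ofReal_le_spectralRadius_of_smul_le_mulVec (hM : ∀ i j, 0 ≤ M i j) {x : ι → ℝ}
    (hx : 0 ≤ x) (hx0 : x ≠ 0) {r : ℝ} (hr : 0 ≤ r) (h : r • x ≤ M *ᵥ x) :
    ENNReal.ofReal r ≤ spectralRadius ℂ (M.map ((↑) : ℝ → ℂ)) := by
  have : CompleteSpace (Matrix ι ι ℂ) := FiniteDimensional.complete ℂ _
  obtain ⟨i, hi⟩ := Function.ne_iff.1 hx0
  have hxi : 0 < x i := (hx i).lt_of_ne' hi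
  set xc : ι → ℂ := Complex.ofRealHom ∘ x
  have hxc : 0 < ‖xc‖ := (norm_nonneg _).lt_of_ne' fun h0 => hi <| by
    simpa [xc] using congrFun (norm_eq_zero.1 h0) i
  refine ofReal_le_of_mul_pow_le hr (div_pos hxi hxc) (fun k => ?_)
    (spectrum.pow_nnnorm_pow_one_div_tendsto_nhds_spectralRadius _)
  rw [coe_nnnorm, div_mul_eq_mul_div, div_le_iff₀ hxc, mul_comm]
  calc r ^ k * x i ≤ ((M ^ k) *ᵥ x) i := pow_smul_le_pow_mulVec hM hr h k i
    _ ≤ ‖(((M.map Complex.ofRealHom) ^ k) *ᵥ xc) i‖ := by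
      rw [← Matrix.map_pow, ← RingHom.map_mulVec]
      exact (le_abs_self _).trans_eq (Complex.norm_real _).symm
    _ ≤ ‖((M.map Complex.ofRealHom) ^ k) *ᵥ xc‖ := norm_le_pi_norm _ i
    _ ≤ ‖(M.map Complex.ofRealHom) ^ k‖ * ‖xc‖ := Matrix.linfty_opNorm_mulVec _ _

lemma exists_pow_apply_pos_of_reflTransGen (hM : ∀ i j, 0 ≤ M i j) {i j : ι}
    (h : Relation.ReflTransGen (fun a b => 0 < M a b) i j) : ∃ k, 0 < (M ^ k) i j := by
  induction h with
  | refl => exact ⟨0, by simp⟩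
  | @tail b c _ hbc ih =>
    obtain ⟨k, hk⟩ := ih
    refine ⟨k + 1, ?_⟩
    rw [pow_succ, mul_apply]
    exact Finset.sum_pos' (fun l _ => mul_nonneg (pow_apply_nonneg hM k i l) (hM l c))
      ⟨b, Finset.mem_univ b, mul_pos hk hbc⟩

lemma ofReal_lt_spectralRadius_of_smul_le_mulVec (hM : ∀ i j, 0 ≤ M i j) {x : ι → ℝ}
    (hx : 0 ≤ x) {r : ℝ} (hr : 0 ≤ r) (h : r • x ≤ M *ᵥ x) {u : ι}
    (hu : r * x u < (M *ᵥ x) u)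
    (hreach : ∀ i, Relation.ReflTransGen (fun a b => 0 < M a b) i u) :
    ENNReal.ofReal r < spectralRadius ℂ (M.map ((↑) : ℝ → ℂ)) := by
  choose k hk using fun i => exists_pow_apply_pos_of_reflTransGen hM (hreach i)
  set P : Matrix ι ι ℝ := ∑ i, M ^ k i
  have hP : ∀ i j, 0 ≤ P i j := fun i j => by
    simpa only [P, Matrix.sum_apply] using
      Finset.sum_nonneg fun l _ => pow_apply_nonneg hM (k l) i j
  have hPu : ∀ i, 0 < P i u := fun i => by
    simpa only [P, Matrix.sum_apply] using Finset.sum_pos'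
      (fun l _ => pow_apply_nonneg hM (k l) i u) ⟨i, Finset.mem_univ i, hk i⟩
  have hPM : P * M = M * P :=
    (Commute.sum_left _ _ _ fun i _ => (Commute.refl M).pow_left (k i)).eq
  set z := P *ᵥ x
  have hgap : ∀ i, 0 < (M *ᵥ z - r • z) i := fun i => by
    have hz : M *ᵥ z - r • z = P *ᵥ (M *ᵥ x - r • x) := by
      rw [mulVec_sub, mulVec_smul, mulVec_mulVec, mulVec_mulVec, hPM]
    rw [hz]
    exact Finset.sum_pos' (fun j _ => mul_nonneg (hP i j) (sub_nonneg.2 (h j)))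
      ⟨u, Finset.mem_univ u, mul_pos (hPu i) (by simpa using hu)⟩
  obtain ⟨ε, hεz, hε⟩ : ∃ ε : ℝ, (∀ i, ε * z i < (M *ᵥ z - r • z) i) ∧ 0 < ε := by
    have hsmall : ∀ᶠ ε in 𝓝 (0 : ℝ), ∀ i, ε * z i < (M *ᵥ z - r • z) i :=
      eventually_all.2 fun i => (continuous_mul_const (z i)).tendsto' 0 0 (zero_mul _)
        |>.eventually (gt_mem_nhds (hgap i))
    exact ((hsmall.filter_mono nhdsWithin_le_nhds).and
      (self_mem_nhdsWithin : Set.Ioi (0 : ℝ) ∈ 𝓝[>] 0)).exists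
  have hz : 0 ≤ z := fun i => dotProduct_nonneg_of_nonneg (hP i) hx
  have hz0 : z ≠ 0 := fun h0 => (hgap u).ne' (by simp [h0])
  have hzε : (r + ε) • z ≤ M *ᵥ z := fun i => by
    have := hεz i
    simp only [Pi.sub_apply, Pi.smul_apply, smul_eq_mul] at this ⊢
    linarith
  calc ENNReal.ofReal r < ENNReal.ofReal (r + ε) :=
        (ENNReal.ofReal_lt_ofReal_iff (by linarith)).2 (by linarith)
    _ ≤ _ := ofReal_le_spectralRadius_of_smul_le_mulVec hM hz hz0 (by linarith) hzε

end NonnegMatrix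

lemma radius_nonneg (M : Matrix (Fin n) (Fin n) ℝ) : 0 ≤ radius M :=
  Real.sSup_nonneg (by rintro _ ⟨μ, -, rfl⟩; exact norm_nonneg μ)

lemma spectralRadius_le_ofReal_radius (M : Matrix (Fin n) (Fin n) ℝ) :
    spectralRadius ℂ (M.map ((↑) : ℝ → ℂ)) ≤ ENNReal.ofReal (radius M) := by
  have hbdd : BddAbove {r : ℝ | ∃ μ ∈ spectrum ℂ (M.map ((↑) : ℝ → ℂ)), r = ‖μ‖} := by
    simpa only [Set.image, eq_comm] using ((Matrix.finite_spectrum _).image (‖·‖)).bddAbove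
  refine iSup₂_le fun μ hμ => ?_
  rw [← enorm_eq_nnnorm, ← ofReal_norm]
  exact ENNReal.ofReal_le_ofReal (le_csSup hbdd ⟨μ, hμ, rfl⟩)

lemma le_radius_of_smul_le_mulVec {M : Matrix (Fin n) (Fin n) ℝ} (hM : ∀ i j, 0 ≤ M i j)
    {x : Fin n → ℝ} (hx : 0 ≤ x) (hx0 : x ≠ 0) {r : ℝ} (hr : 0 ≤ r) (h : r • x ≤ M *ᵥ x) :
    r ≤ radius M :=
  (ENNReal.ofReal_le_ofReal_iff (radius_nonneg M)).1 <|
    (ofReal_le_spectralRadius_of_smul_le_mulVec hM hx hx0 hr h).trans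
      (spectralRadius_le_ofReal_radius M)

lemma lt_radius_of_smul_le_mulVec {M : Matrix (Fin n) (Fin n) ℝ} (hM : ∀ i j, 0 ≤ M i j)
    {x : Fin n → ℝ} (hx : 0 ≤ x) {r : ℝ} (hr : 0 ≤ r) (h : r • x ≤ M *ᵥ x) {u : Fin n}
    (hu : r * x u < (M *ᵥ x) u)
    (hreach : ∀ i, Relation.ReflTransGen (fun a b => 0 < M a b) i u) :
    r < radius M :=
  (ENNReal.ofReal_lt_ofReal_iff_of_nonneg hr).1 <|
    (ofReal_lt_spectralRadius_of_smul_le_mulVec hM hx hr h hu hreach).trans_le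
      (spectralRadius_le_ofReal_radius M)

lemma Qmat_apply (W : Fin n → Fin n → ℕ) (i j : Fin n) :
    Qmat W i j = (if i = j then (outdeg W i : ℝ) else 0) + W i j := by
  simp [Qmat, adjMat, diagonal_apply]

lemma Qmat_nonneg (W : Fin n → Fin n → ℕ) (i j : Fin n) : 0 ≤ Qmat W i j := by
  rw [Qmat_apply]; positivity

lemma Qmat_pos_of_ne_zero {W : Fin n → Fin n → ℕ} {i j : Fin n} (h : W i j ≠ 0) :
    0 < Qmat W i j := by
  rw [Qmat_apply]
  have : (0 : ℝ) < W i j := by exact_mod_cast Nat.pos_of_ne_zero h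
  split_ifs <;> positivity

def rotateArc (W : Fin n → Fin n → ℕ) (u v w : Fin n) : Fin n → Fin n → ℕ := fun i j =>
  W i j + (if i = u ∧ j = w then 1 else 0) - (if i = u ∧ j = v then 1 else 0)

section Rotation

variable {W : Fin n → Fin n → ℕ} {u v w : Fin n}

lemma adjMat_rotateArc (huv : W u v ≠ 0) :
    adjMat (rotateArc W u v w) = adjMat W + single u w 1 - single u v 1 := by
  ext i j
  have hle : (if i = u ∧ j = v then 1 else 0) ≤ W i j + (if i = u ∧ j = w then 1 else 0) := by
    by_cases h : i = u ∧ j = v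
    · obtain ⟨rfl, rfl⟩ := h
      rw [if_pos ⟨rfl, rfl⟩]
      exact (Nat.one_le_iff_ne_zero.2 huv).trans (Nat.le_add_right _ _)
    · rw [if_neg h]; exact Nat.zero_le _
  simp only [adjMat, rotateArc, Matrix.sub_apply, Matrix.add_apply, single_apply,
    Nat.cast_sub hle]
  push_cast
  simp only [eq_comm]

lemma outdeg_rotateArc (huv : W u v ≠ 0) : outdeg (rotateArc W u v w) = outdeg W := by
  have hrow : ∀ (a : Fin n) i, ∑ j, single u a (1 : ℝ) i j = if u = i then 1 else 0 := by
    intro a i; by_cases h : u = i <;> simp [single_apply, h]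
  funext i
  have h := congrArg (fun A : Matrix (Fin n) (Fin n) ℝ => ∑ j, A i j)
    (adjMat_rotateArc (w := w) huv)
  simp only [Matrix.sub_apply, Matrix.add_apply, Finset.sum_sub_distrib, Finset.sum_add_distrib,
    hrow, add_sub_cancel_right, adjMat] at h
  rw [outdeg, outdeg]
  exact_mod_cast h

lemma Qmat_rotateArc_mulVec (huv : W u v ≠ 0) (x : Fin n → ℝ) :
    Qmat (rotateArc W u v w) *ᵥ x = Qmat W *ᵥ x + (x w - x v) • Pi.single u 1 := by
  have hQ : Qmat (rotateArc W u v w) = Qmat W + single u w 1 - single u v 1 := by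
    rw [Qmat, Qmat, outdeg_rotateArc huv, adjMat_rotateArc huv]
    abel
  rw [hQ, sub_mulVec, add_mulVec, single_mulVec_eq, single_mulVec_eq, sub_smul, one_mul,
    one_mul, add_sub_assoc]

end Rotation

theorem q_arc_rotation_general {n : ℕ} (W : Fin n → Fin n → ℕ) (u v w : Fin n) (huv : W u v ≠ 0)
    (x : Fin n → ℝ) (hxpos : ∀ i, 0 < x i)
    (hxeig : Qmat W *ᵥ x = q W • x)
    (H : Fin n → Fin n → ℕ)
    (hH : ∀ i j, H i j =
      W i j + (if i = u ∧ j = w then 1 else 0) - (if i = u ∧ j = v then 1 else 0)) :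
    (x v ≤ x w → q W ≤ q H) ∧ (StronglyConnected H → x v < x w → q W < q H) := by
  obtain rfl : H = rotateArc W u v w := funext₂ hH
  have hQHx : Qmat (rotateArc W u v w) *ᵥ x = q W • x + (x w - x v) • Pi.single u 1 := by
    rw [Qmat_rotateArc_mulVec huv, hxeig]
  have hx : 0 ≤ x := fun i => (hxpos i).le
  have hsub (hvw : x v ≤ x w) : q W • x ≤ Qmat (rotateArc W u v w) *ᵥ x :=
    hQHx ▸ le_add_of_nonneg_right
      (smul_nonneg (sub_nonneg.2 hvw) (Pi.single_nonneg.2 zero_le_one))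
  constructor
  · intro hvw
    exact le_radius_of_smul_le_mulVec (Qmat_nonneg _) hx
      (fun h0 => (hxpos u).ne' (congrFun h0 u)) (radius_nonneg _) (hsub hvw)
  · intro hsc hvw
    refine lt_radius_of_smul_le_mulVec (Qmat_nonneg _) hx (radius_nonneg _) (hsub hvw.le)
      (u := u) (by simpa [hQHx] using hvw) fun i => ?_
    exact Relation.ReflTransGen.mono (fun a b => Qmat_pos_of_ne_zero) _ _ (hsc i u)

/-- Rotating an arc `(u,v)` to `(u,w)` (possibly creating a multiple arc
`(u,w)`): if `x_w ≥ x_v` then `q(H) ≥ q(D)`; if moreover `H` is strongly connected and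
`x_w > x_v` then `q(H) > q(D)`, where `x` is the positive unit eigenvector of `Q(D)`
corresponding to `q(D)`. -/
theorem q_arc_rotation {n : ℕ} (W : Fin n → Fin n → ℕ) (hW : Simple W)
    (hsc : StronglyConnected W) (u v w : Fin n) (huv : W u v ≠ 0)
    (x : Fin n → ℝ) (hxpos : ∀ i, 0 < x i) (hxunit : ∑ i, (x i) ^ 2 = 1)
    (hxeig : Qmat W *ᵥ x = q W • x)
    (H : Fin n → Fin n → ℕ)
    (hH : ∀ i j, H i j =
      W i j + (if i = u ∧ j = w then 1 else 0) - (if i = u ∧ j = v then 1 else 0)) :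
    (x v ≤ x w → q W ≤ q H) ∧ (StronglyConnected H → x v < x w → q W < q H) :=
  q_arc_rotation_general W u v w huv x hxpos hxeig H hH

end SignlessDigraph
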